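/- For all m > 0 and nonnegative integers n, n', ρ, ρ' (with ρ ≤ n, ρ' ≤ n'), one has K_R(q^m, n+n', ρ+ρ') ≤ K_R(q^m,n,ρ)·K_R(q^m,n',ρ'). In particular K_R(q^m,n+1,ρ+1) ≤ K_R(q^m,n,ρ) and K_R(q^m,n+1,ρ) ≤ q^m·K_R(q^m,n,ρ). -/

import Mathlib

open scoped BigOperators

noncomputable section

/-- The rank weight of a vector over the extension field `Fqm`, with respect to the base
field `Fq`: the dimension over `Fq` of the `Fq`-span of the coordinates. -/
def rankWeight (Fq : Type) {Fqm : Type} [Field Fq] [Field Fqm] [Algebra Fq Fqm]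
    {n : ℕ} (x : Fin n → Fqm) : ℕ :=
  Module.finrank Fq (Submodule.span Fq (Set.range x))

/-- An elementary linear subspace: a subspace generated by vectors all of whose
coordinates lie in the base field `Fq`. -/
def IsELS (Fq : Type) {Fqm : Type} [Field Fq] [Field Fqm] [Algebra Fq Fqm]
    {n : ℕ} (V : Submodule Fqm (Fin n → Fqm)) : Prop :=
  ∃ S : Set (Fin n → Fqm),
    (∀ s ∈ S, ∀ i, s i ∈ Set.range (algebraMap Fq Fqm)) ∧
    V = Submodule.span Fqm S

/-- The ball of rank radius `r` centered at `c`. -/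
def rankBall (Fq : Type) {Fqm : Type} [Field Fq] [Field Fqm] [Algebra Fq Fqm]
    {n : ℕ} (r : ℕ) (c : Fin n → Fqm) : Set (Fin n → Fqm) :=
  {y | rankWeight Fq (y - c) ≤ r}

/-- `V_r(q^m, n)`: the volume of a ball of rank radius `r`. -/
def ballVol (Fq Fqm : Type) [Field Fq] [Field Fqm] [Algebra Fq Fqm]
    (n r : ℕ) : ℕ :=
  Nat.card ↥(rankBall Fq r (0 : Fin n → Fqm))

/-- `K_R(q^m, n, ρ)`: minimum cardinality of a nonempty code of length `n` with rank
covering radius at most `ρ`. -/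
def coveringNumber (Fq Fqm : Type) [Field Fq] [Field Fqm] [Algebra Fq Fqm]
    (n ρ : ℕ) : ℕ :=
  sInf {k : ℕ | ∃ C : Finset (Fin n → Fqm), C.Nonempty ∧
    (∀ x : Fin n → Fqm, ∃ c ∈ C, rankWeight Fq (x - c) ≤ ρ) ∧ C.card = k}

/-- `σ(q) = (1/ln q) Σ_{k≥1} 1/(k(q^k - 1))`. -/
def sigmaQ (q : ℕ) : ℝ :=
  (1 / Real.log q) * ∑' k : ℕ, 1 / (((k : ℝ) + 1) * ((q : ℝ) ^ (k + 1) - 1))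

/-- `α(e, u) = ∏_{i=0}^{u-1} (q^e - q^i)` (with integer exponent `e`). -/
def alphaQ (q : ℕ) (e : ℤ) (u : ℕ) : ℚ :=
  ∏ i ∈ Finset.range u, ((q : ℚ) ^ e - (q : ℚ) ^ i)

/-- The Gaussian binomial `[n u]_q = α(n,u)/α(u,u)`. -/
def gaussQ (q n u : ℕ) : ℚ := alphaQ q n u / alphaQ q u u


/-!
Concatenating a covering code of length `n` and radius `ρ` with one of length `n'` and radius
`ρ'` gives a covering code of length `n + n'` and radius `ρ + ρ'`: the coordinates of a
concatenated vector span the sum of the spans of the two halves, so rank weight is subadditive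
under concatenation. The two special cases concatenate with the trivial codes `{0}`, covering
`GF(q^m)^1` with radius `1`, and `GF(q^m)^1` itself, covering it with radius `0`.
-/

theorem Fin.range_append {α : Type*} {n n' : ℕ} (x : Fin n → α) (y : Fin n' → α) :
    Set.range (Fin.append x y) = Set.range x ∪ Set.range y := by
  ext z
  constructor
  · rintro ⟨i, rfl⟩
    induction i using Fin.addCases with
    | left j => exact Or.inl ⟨j, (Fin.append_left x y j).symm⟩
    | right j => exact Or.inr ⟨j, (Fin.append_right x y j).symm⟩
  · rintro (⟨j, rfl⟩ | ⟨j, rfl⟩)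
    · exact ⟨Fin.castAdd n' j, Fin.append_left x y j⟩
    · exact ⟨Fin.natAdd n j, Fin.append_right x y j⟩

theorem Fin.append_sub_append {α : Type*} [Sub α] {n n' : ℕ} (x z : Fin n → α)
    (y w : Fin n' → α) : Fin.append x y - Fin.append z w = Fin.append (x - z) (y - w) := by
  funext i
  induction i using Fin.addCases <;> simp

section RankMetric

variable (Fq : Type) {Fqm : Type} [Field Fq] [Field Fqm] [Algebra Fq Fqm]

theorem rankWeight_le_length {n : ℕ} (x : Fin n → Fqm) : rankWeight Fq x ≤ n :=
  (finrank_range_le_card (R := Fq) x).trans_eq (Fintype.card_fin n)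

theorem rankWeight_zero (n : ℕ) : rankWeight Fq (0 : Fin n → Fqm) = 0 := by
  rw [rankWeight, Submodule.span_eq_bot.2 (by rintro _ ⟨i, rfl⟩; rfl), finrank_bot]

theorem rankWeight_append_le {n n' : ℕ} (x : Fin n → Fqm) (y : Fin n' → Fqm) :
    rankWeight Fq (Fin.append x y) ≤ rankWeight Fq x + rankWeight Fq y := by
  rw [rankWeight, Fin.range_append, Submodule.span_union]
  have := FiniteDimensional.span_of_finite Fq (Set.finite_range x)
  have := FiniteDimensional.span_of_finite Fq (Set.finite_range y)
  exact Submodule.finrank_add_le_finrank_add_finrank _ _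

def IsRankCoveringCode {n : ℕ} (ρ : ℕ) (C : Finset (Fin n → Fqm)) : Prop :=
  ∀ x, ∃ c ∈ C, rankWeight Fq (x - c) ≤ ρ

variable {Fq} in
theorem IsRankCoveringCode.mono {n ρ ρ' : ℕ} {C : Finset (Fin n → Fqm)}
    (hC : IsRankCoveringCode Fq ρ C) (h : ρ ≤ ρ') : IsRankCoveringCode Fq ρ' C := fun x =>
  let ⟨c, hc, hxc⟩ := hC x
  ⟨c, hc, hxc.trans h⟩

theorem isRankCoveringCode_univ [Fintype Fqm] (n : ℕ) :
    IsRankCoveringCode Fq 0 (Finset.univ : Finset (Fin n → Fqm)) :=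
  fun x => ⟨x, Finset.mem_univ x, by rw [sub_self, rankWeight_zero]⟩

theorem isRankCoveringCode_singleton_zero (n : ℕ) :
    IsRankCoveringCode Fq n ({0} : Finset (Fin n → Fqm)) :=
  fun x => ⟨0, Finset.mem_singleton_self 0, rankWeight_le_length Fq (x - 0)⟩

variable {Fq} in
theorem IsRankCoveringCode.image₂_append [DecidableEq Fqm] {n n' ρ ρ' : ℕ}
    {C : Finset (Fin n → Fqm)} {C' : Finset (Fin n' → Fqm)}
    (hC : IsRankCoveringCode Fq ρ C) (hC' : IsRankCoveringCode Fq ρ' C') :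
    IsRankCoveringCode Fq (ρ + ρ') (Finset.image₂ Fin.append C C') := by
  intro x
  obtain ⟨c, hc, hxc⟩ := hC (fun i => x (Fin.castAdd n' i))
  obtain ⟨c', hc', hxc'⟩ := hC' (fun i => x (Fin.natAdd n i))
  refine ⟨Fin.append c c', Finset.mem_image₂_of_mem hc hc', ?_⟩
  rw [← Fin.append_castAdd_natAdd (f := x), Fin.append_sub_append]
  exact (rankWeight_append_le Fq _ _).trans (add_le_add hxc hxc')

variable (Fqm)

theorem coveringNumber_le_card {n ρ : ℕ} {C : Finset (Fin n → Fqm)} (hne : C.Nonempty)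
    (hC : IsRankCoveringCode Fq ρ C) : coveringNumber Fq Fqm n ρ ≤ C.card :=
  Nat.sInf_le ⟨C, hne, hC, rfl⟩

theorem exists_isRankCoveringCode_card_eq_coveringNumber [Fintype Fqm] (n ρ : ℕ) :
    ∃ C : Finset (Fin n → Fqm), C.Nonempty ∧ IsRankCoveringCode Fq ρ C ∧
      C.card = coveringNumber Fq Fqm n ρ := by
  classical
  have hmem : coveringNumber Fq Fqm n ρ ∈ {k | ∃ C : Finset (Fin n → Fqm), C.Nonempty ∧
      IsRankCoveringCode Fq ρ C ∧ C.card = k} :=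
    Nat.sInf_mem ⟨_, Finset.univ, Finset.univ_nonempty,
      (isRankCoveringCode_univ Fq n).mono (Nat.zero_le ρ), rfl⟩
  exact hmem

theorem coveringNumber_add_le_mul [Fintype Fqm] (n n' ρ ρ' : ℕ) :
    coveringNumber Fq Fqm (n + n') (ρ + ρ')
      ≤ coveringNumber Fq Fqm n ρ * coveringNumber Fq Fqm n' ρ' := by
  classical
  obtain ⟨C, hne, hC, hcard⟩ := exists_isRankCoveringCode_card_eq_coveringNumber Fq Fqm n ρ
  obtain ⟨C', hne', hC', hcard'⟩ :=
    exists_isRankCoveringCode_card_eq_coveringNumber Fq Fqm n' ρ'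
  rw [← hcard, ← hcard']
  calc coveringNumber Fq Fqm (n + n') (ρ + ρ')
      ≤ (Finset.image₂ Fin.append C C').card :=
        coveringNumber_le_card Fq Fqm (hne.image₂ hne') (hC.image₂_append hC')
    _ ≤ C.card * C'.card := Finset.card_image₂_le _ _ _

theorem coveringNumber_self_le_one (n : ℕ) : coveringNumber Fq Fqm n n ≤ 1 :=
  coveringNumber_le_card Fq Fqm (Finset.singleton_nonempty 0)
    (isRankCoveringCode_singleton_zero Fq n)

theorem coveringNumber_zero_le_card_pow [Fintype Fqm] (n : ℕ) :
    coveringNumber Fq Fqm n 0 ≤ Fintype.card Fqm ^ n := by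
  classical
  simpa using coveringNumber_le_card Fq Fqm Finset.univ_nonempty (isRankCoveringCode_univ Fq n)

end RankMetric

theorem stmt10_general (q m n n' ρ ρ' : ℕ) (Fq Fqm : Type) [Field Fq] [Fintype Fq] [Field Fqm]
    [Fintype Fqm] [Algebra Fq Fqm]
    (hq : Fintype.card Fq = q) (hm : Module.finrank Fq Fqm = m) :
    coveringNumber Fq Fqm (n + n') (ρ + ρ')
        ≤ coveringNumber Fq Fqm n ρ * coveringNumber Fq Fqm n' ρ' ∧
    coveringNumber Fq Fqm (n + 1) (ρ + 1) ≤ coveringNumber Fq Fqm n ρ ∧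
    coveringNumber Fq Fqm (n + 1) ρ ≤ q ^ m * coveringNumber Fq Fqm n ρ := by
  refine ⟨coveringNumber_add_le_mul Fq Fqm n n' ρ ρ', ?_, ?_⟩
  · calc coveringNumber Fq Fqm (n + 1) (ρ + 1)
        ≤ coveringNumber Fq Fqm n ρ * coveringNumber Fq Fqm 1 1 :=
          coveringNumber_add_le_mul Fq Fqm n 1 ρ 1
      _ ≤ coveringNumber Fq Fqm n ρ * 1 :=
          Nat.mul_le_mul_left _ (coveringNumber_self_le_one Fq Fqm 1)
      _ = coveringNumber Fq Fqm n ρ := mul_one _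
  · have hcard : Fintype.card Fqm = q ^ m := by
      rw [← hq, ← hm, Module.card_eq_pow_finrank (K := Fq)]
    calc coveringNumber Fq Fqm (n + 1) (ρ + 0)
        ≤ coveringNumber Fq Fqm n ρ * coveringNumber Fq Fqm 1 0 :=
          coveringNumber_add_le_mul Fq Fqm n 1 ρ 0
      _ ≤ coveringNumber Fq Fqm n ρ * Fintype.card Fqm ^ 1 :=
          Nat.mul_le_mul_left _ (coveringNumber_zero_le_card_pow Fq Fqm 1)
      _ = q ^ m * coveringNumber Fq Fqm n ρ := by rw [pow_one, hcard, mul_comm]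

/-- Subadditivity of the covering number:
`K_R(q^m, n+n', ρ+ρ') ≤ K_R(q^m,n,ρ) K_R(q^m,n',ρ')`, and the particular cases
`K_R(q^m,n+1,ρ+1) ≤ K_R(q^m,n,ρ)` and `K_R(q^m,n+1,ρ) ≤ q^m K_R(q^m,n,ρ)`. -/
theorem stmt10 (q m n n' ρ ρ' : ℕ) (Fq Fqm : Type) [Field Fq] [Fintype Fq] [Field Fqm]
    [Fintype Fqm] [Algebra Fq Fqm]
    (hq : Fintype.card Fq = q) (hm : Module.finrank Fq Fqm = m) (hm0 : 0 < m)
    (hρ : ρ ≤ n) (hρ' : ρ' ≤ n') :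
    coveringNumber Fq Fqm (n + n') (ρ + ρ')
        ≤ coveringNumber Fq Fqm n ρ * coveringNumber Fq Fqm n' ρ' ∧
    coveringNumber Fq Fqm (n + 1) (ρ + 1) ≤ coveringNumber Fq Fqm n ρ ∧
    coveringNumber Fq Fqm (n + 1) ρ ≤ q ^ m * coveringNumber Fq Fqm n ρ :=
  stmt10_general q m n n' ρ ρ' Fq Fqm hq hm

end
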